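/- arXiv:1804.03714 — 2 statements merged into one kernel-verified Lean document; each statement's English description precedes it below -/
import Mathlib

section
/- For fixed s > -1 and λ > 0, let F_Z^{(r)}(x) = B(x+1, r, p_r)/B(x+1, r) be the Continuous Negative Binomial CDF with parameters r and p_r, where r p_r → λ as r → ∞ and p_r → 0. Then F_Z^{(r)}(s) → Γ(s+1, λ)/Γ(s+1), the Continuous Poisson CDF. -/
open MeasureTheory Set Filter

/-- Upper incomplete Gamma function `Γ(a, λ) = ∫_λ^∞ e^{-s} s^{a-1} ds`. -/
noncomputable def incGamma (a lam : ℝ) : ℝ :=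
  ∫ s in Set.Ioi lam, Real.exp (-s) * s ^ (a - 1)

/-- Complete Beta function `B(a,b) = ∫_0^1 t^{a-1}(1-t)^{b-1} dt`. -/
noncomputable def betaFun (a b : ℝ) : ℝ :=
  ∫ t in Set.Ioo (0 : ℝ) 1, t ^ (a - 1) * (1 - t) ^ (b - 1)

/-- Upper incomplete Beta function `B(a,b,x) = ∫_x^1 t^{a-1}(1-t)^{b-1} dt`. -/
noncomputable def betaInc (a b x : ℝ) : ℝ :=
  ∫ t in Set.Ioo x (1 : ℝ), t ^ (a - 1) * (1 - t) ^ (b - 1)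

/-!
Substituting `t = u / r` gives
`r ^ a * B(a, r, q) = ∫_{r q}^{r} u ^ (a - 1) (1 - u / r) ^ (r - 1) du`.
The integrand tends to `u ^ (a - 1) e ^ (-u)` and, for `r ≥ 2`, is dominated by
`u ^ (a - 1) e ^ (-u / 2)`, so by dominated convergence `r ^ a B(a, r, p_r) → Γ(a, λ)`
when `r p_r → λ`, and `r ^ a B(a, r) → Γ(a, 0) = Γ(a)`. The factors `r ^ a` cancel in the
ratio.
-/

open scoped Topology

lemma tendsto_one_sub_div_rpow_sub_one (u : ℝ) :
    Tendsto (fun r : ℕ => (1 - u / r) ^ ((r : ℝ) - 1)) atTop (𝓝 (Real.exp (-u))) := by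
  have hpow : Tendsto (fun r : ℕ => (1 + -u / r) ^ (r : ℝ)) atTop (𝓝 (Real.exp (-u))) :=
    (Real.tendsto_one_add_div_rpow_exp (-u)).comp tendsto_natCast_atTop_atTop
  have hbase : Tendsto (fun r : ℕ => 1 + -u / r) atTop (𝓝 1) := by
    simpa using (tendsto_const_div_atTop_nhds_zero_nat (-u)).const_add 1
  refine (div_one (Real.exp (-u)) ▸ hpow.div hbase one_ne_zero).congr' ?_
  filter_upwards [hbase.eventually (eventually_gt_nhds one_pos)] with r hr
  rw [Pi.div_apply, sub_eq_add_neg 1 (u / r), ← neg_div, Real.rpow_sub hr, Real.rpow_one]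

lemma one_sub_div_rpow_le_exp_neg_half {r u : ℝ} (hr : 2 ≤ r) (hu : 0 ≤ u) (hur : u ≤ r) :
    (1 - u / r) ^ (r - 1) ≤ Real.exp (-(u / 2)) := by
  have hr0 : 0 < r := by linarith
  have hhalf : 1 / 2 ≤ (r - 1) / r := by rw [le_div_iff₀ hr0]; linarith
  calc (1 - u / r) ^ (r - 1)
      ≤ Real.exp (-(u / r)) ^ (r - 1) :=
        Real.rpow_le_rpow (by rwa [sub_nonneg, div_le_one hr0])
          (by linarith [Real.add_one_le_exp (-(u / r))]) (by linarith)
    _ = Real.exp (-(u * ((r - 1) / r))) := by rw [← Real.exp_mul]; ring_nf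
    _ ≤ Real.exp (-(u / 2)) := by
        have := mul_le_mul_of_nonneg_left hhalf hu
        gcongr
        linarith

lemma integral_Ioo_mul_one_sub_div_rpow_eq {a b r q : ℝ} (hr : 0 < r) (hq : q ∈ Icc 0 1) :
    ∫ u in Ioo (r * q) r, u ^ (a - 1) * (1 - u / r) ^ (b - 1) = r ^ a * betaInc a b q := by
  have hscale : ∀ u ∈ Ioo (r * q) r,
      u ^ (a - 1) * (1 - u / r) ^ (b - 1) =
        r ^ (a - 1) * ((u / r) ^ (a - 1) * (1 - u / r) ^ (b - 1)) := by
    intro u hu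
    have hu0 : 0 < u := (mul_nonneg hr.le hq.1).trans_lt hu.1
    rw [Real.div_rpow hu0.le hr.le]
    field_simp
  have hsubst :
      ∫ u in Ioo (r * q) r, (u / r) ^ (a - 1) * (1 - u / r) ^ (b - 1) = r * betaInc a b q := by
    rw [betaInc, ← integral_Ioc_eq_integral_Ioo,
      ← intervalIntegral.integral_of_le (by nlinarith [hq.2]),
      intervalIntegral.integral_comp_div (fun t => t ^ (a - 1) * (1 - t) ^ (b - 1)) hr.ne',
      mul_div_cancel_left₀ _ hr.ne', div_self hr.ne', smul_eq_mul,
      intervalIntegral.integral_of_le hq.2, integral_Ioc_eq_integral_Ioo]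
  rw [setIntegral_congr_fun measurableSet_Ioo hscale, integral_const_mul, hsubst, ← mul_assoc,
    ← Real.rpow_add_one hr.ne', sub_add_cancel]

lemma betaFun_eq_betaInc_zero (a b : ℝ) : betaFun a b = betaInc a b 0 := rfl

lemma incGamma_zero {a : ℝ} (ha : 0 < a) : incGamma a 0 = Real.Gamma a :=
  (Real.Gamma_eq_integral ha).symm

lemma integrableOn_rpow_mul_exp_neg_half {a : ℝ} (ha : 0 < a) :
    IntegrableOn (fun u => u ^ (a - 1) * Real.exp (-(u / 2))) (Ioi 0) := by
  refine (integrableOn_rpow_mul_exp_neg_mul_rpow (s := a - 1) (by linarith) one_pos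
    one_half_pos).congr_fun (fun u _ => ?_) measurableSet_Ioi
  simp only [Real.rpow_one]
  congr 2
  ring

lemma tendsto_integral_Ioo_mul_one_sub_div_rpow {a c : ℝ} (ha : 0 < a) {q : ℕ → ℝ}
    (hq : ∀ r, 0 ≤ q r) (hqc : Tendsto (fun r : ℕ => r * q r) atTop (𝓝 c)) :
    Tendsto (fun r : ℕ =>
        ∫ u in Ioo (r * q r) (r : ℝ), u ^ (a - 1) * (1 - u / r) ^ ((r : ℝ) - 1))
      atTop (𝓝 (incGamma a c)) := by
  set F : ℕ → ℝ → ℝ := fun r => (Ioo (r * q r) (r : ℝ)).indicator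
    fun u => u ^ (a - 1) * (1 - u / r) ^ ((r : ℝ) - 1)
  set f : ℝ → ℝ := (Ioi c).indicator fun u => Real.exp (-u) * u ^ (a - 1)
  set bound : ℝ → ℝ := (Ioi 0).indicator fun u => u ^ (a - 1) * Real.exp (-(u / 2))
  have hF_le : ∀ᶠ r in atTop, ∀ u, ‖F r u‖ ≤ bound u := by
    filter_upwards [eventually_ge_atTop 2] with r hr u
    by_cases hu : u ∈ Ioo (r * q r) (r : ℝ)
    · have hu0 : 0 < u := (mul_nonneg r.cast_nonneg (hq r)).trans_lt hu.1
      simp only [F, bound, indicator_of_mem hu, indicator_of_mem (mem_Ioi.2 hu0)]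
      have hbase : 0 ≤ 1 - u / r := by rw [sub_nonneg, div_le_one (by positivity)]; exact hu.2.le
      rw [Real.norm_of_nonneg (mul_nonneg (Real.rpow_nonneg hu0.le _) (Real.rpow_nonneg hbase _))]
      exact mul_le_mul_of_nonneg_left
        (one_sub_div_rpow_le_exp_neg_half (by exact_mod_cast hr) hu0.le hu.2.le)
        (Real.rpow_nonneg hu0.le _)
    · simp only [F, indicator_of_notMem hu, norm_zero, bound]
      exact indicator_nonneg
        (fun u hu => mul_nonneg (Real.rpow_nonneg (le_of_lt hu) _) (Real.exp_pos _).le) u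
  have hF_lim : ∀ u ≠ c, Tendsto (F · u) atTop (𝓝 (f u)) := by
    intro u huc
    rcases huc.lt_or_gt with huc | huc
    · rw [show f u = 0 from indicator_of_notMem (not_lt.2 huc.le) _]
      refine tendsto_const_nhds.congr' ?_
      filter_upwards [hqc.eventually (eventually_gt_nhds huc)] with r hr
      exact (indicator_of_notMem (fun hu => hr.not_gt hu.1) _).symm
    · rw [show f u = _ from indicator_of_mem (mem_Ioi.2 huc) _]
      refine ((tendsto_one_sub_div_rpow_sub_one u).mul_const (u ^ (a - 1))).congr' ?_
      filter_upwards [hqc.eventually (eventually_lt_nhds huc),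
        tendsto_natCast_atTop_atTop.eventually_gt_atTop u] with r hr hru
      simp only [F, indicator_of_mem (mem_Ioo.2 ⟨hr, hru⟩)]
      ring
  have hlim := tendsto_integral_filter_of_dominated_convergence (F := F) (f := f) bound
    (Eventually.of_forall fun r =>
      (Measurable.indicator (by fun_prop) measurableSet_Ioo).aestronglyMeasurable)
    (hF_le.mono fun _ h => ae_of_all _ h)
    ((integrableOn_rpow_mul_exp_neg_half ha).integrable_indicator measurableSet_Ioi)
    ((Measure.ae_ne volume c).mono hF_lim)
  simpa only [F, f, integral_indicator measurableSet_Ioo, integral_indicator measurableSet_Ioi,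
    incGamma] using hlim

lemma tendsto_rpow_mul_betaInc {a c : ℝ} (ha : 0 < a) {q : ℕ → ℝ}
    (hq : ∀ r, q r ∈ Icc 0 1) (hqc : Tendsto (fun r : ℕ => r * q r) atTop (𝓝 c)) :
    Tendsto (fun r : ℕ => (r : ℝ) ^ a * betaInc a r (q r))
      atTop (𝓝 (incGamma a c)) := by
  refine (tendsto_integral_Ioo_mul_one_sub_div_rpow ha (fun r => (hq r).1) hqc).congr' ?_
  filter_upwards [eventually_gt_atTop 0] with r hr
  exact integral_Ioo_mul_one_sub_div_rpow_eq (Nat.cast_pos.2 hr) (hq r)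

theorem contNegBinomial_tendsto_contPoisson_general (s lam : ℝ) (hs : -1 < s)
    (p : ℕ → ℝ) (hp01 : ∀ r, p r ∈ Set.Ioo (0 : ℝ) 1)
    (hrp : Tendsto (fun r : ℕ => (r : ℝ) * p r) atTop (nhds lam)) :
    Tendsto (fun r : ℕ => betaInc (s + 1) (r : ℝ) (p r) / betaFun (s + 1) (r : ℝ))
      atTop (nhds (incGamma (s + 1) lam / Real.Gamma (s + 1))) := by
  have ha : 0 < s + 1 := by linarith
  have hnum := tendsto_rpow_mul_betaInc ha (fun r => Ioo_subset_Icc_self (hp01 r)) hrp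
  have hden := tendsto_rpow_mul_betaInc ha (c := 0) (q := 0) (fun _ => ⟨le_rfl, zero_le_one⟩)
    (by simp)
  rw [incGamma_zero ha] at hden
  refine (hnum.div hden (Real.Gamma_pos_of_pos ha).ne').congr' ?_
  filter_upwards [eventually_gt_atTop 0] with r hr
  rw [betaFun_eq_betaInc_zero]
  exact mul_div_mul_left _ _ (by positivity)

/-- Poisson limit of the Continuous Negative Binomial: if `r pᵣ → λ` and `pᵣ → 0`, then
`F_Z^{(r)}(s) = B(s+1, r, pᵣ)/B(s+1, r) → Γ(s+1, λ)/Γ(s+1)`. -/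
theorem contNegBinomial_tendsto_contPoisson (s lam : ℝ) (hs : -1 < s) (hlam : 0 < lam)
    (p : ℕ → ℝ) (hp01 : ∀ r, p r ∈ Set.Ioo (0 : ℝ) 1)
    (hrp : Tendsto (fun r : ℕ => (r : ℝ) * p r) atTop (nhds lam))
    (hp0 : Tendsto p atTop (nhds 0)) :
    Tendsto (fun r : ℕ => betaInc (s + 1) (r : ℝ) (p r) / betaFun (s + 1) (r : ℝ))
      atTop (nhds (incGamma (s + 1) lam / Real.Gamma (s + 1))) :=
  contNegBinomial_tendsto_contPoisson_general s lam hs p hp01 hrp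
end

section
/- For the Continuous Poisson distribution with parameter λ, the α-quantile Q_α(λ), defined as the unique x > -1 with Γ(x+1, λ)/Γ(x+1) = α, is a strictly increasing continuous function of λ for each fixed α ∈ (0,1). -/
open MeasureTheory Set

/-!
Write `γ(a, λ) = ∫₀^λ e^{-s} s^{a-1} ds`, so that `Γ(a) = γ(a, λ) + Γ(a, λ)`. For `a < b` the
integrands satisfy `s^{b-1} e^{-s} = s^{b-a} · s^{a-1} e^{-s}`, and `s^{b-a}` is `≤ λ^{b-a}` on
`(0, λ]` and `> λ^{b-a}` on `(λ, ∞)`; hence `Γ(a, λ) γ(b, λ) < Γ(b, λ) γ(a, λ)`, which says exactly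
that `Γ(a, λ)/Γ(a)` increases strictly in `a`. It decreases strictly and continuously in `λ`.
The quantile is then the level curve `F(Q λ, λ) = α` of a function `F` increasing in the first
and decreasing in the second variable, which forces `Q` to be increasing; continuity of `F` in
`λ` makes it continuous.
-/

open Filter Topology

section LevelCurve

variable {g : ℝ → ℝ → ℝ} {A S : Set ℝ} {Q : ℝ → ℝ} {α : ℝ}

theorem strictMonoOn_of_level_curve (hmono : ∀ l ∈ S, StrictMonoOn (g · l) A)
    (hanti : ∀ x ∈ A, StrictAntiOn (g x) S) (hQA : MapsTo Q S A)
    (hQ : ∀ l ∈ S, g (Q l) l = α) : StrictMonoOn Q S := by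
  intro l₁ h₁ l₂ h₂ h₁₂
  refine ((hmono l₁ h₁).lt_iff_lt (hQA h₁) (hQA h₂)).mp ?_
  calc g (Q l₁) l₁ = g (Q l₂) l₂ := by rw [hQ l₁ h₁, hQ l₂ h₂]
    _ < g (Q l₂) l₁ := hanti _ (hQA h₂) h₁ h₂ h₁₂

theorem eventually_lt_of_level_curve (hmono : ∀ l ∈ S, StrictMonoOn (g · l) A)
    (hcont : ∀ x ∈ A, ContinuousOn (g x) S) (hQA : MapsTo Q S A)
    (hQ : ∀ l ∈ S, g (Q l) l = α) {l₀ c : ℝ} (hl₀ : l₀ ∈ S) (hc : c ∈ A) (hcQ : c < Q l₀) :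
    ∀ᶠ l in 𝓝[S] l₀, c < Q l := by
  have hlt : g c l₀ < α := hQ l₀ hl₀ ▸ hmono l₀ hl₀ hc (hQA hl₀) hcQ
  filter_upwards [(hcont c hc l₀ hl₀).eventually_lt_const hlt, self_mem_nhdsWithin]
    with l hgl hl
  exact ((hmono l hl).lt_iff_lt hc (hQA hl)).mp (hQ l hl ▸ hgl)

theorem eventually_gt_of_level_curve (hmono : ∀ l ∈ S, StrictMonoOn (g · l) A)
    (hcont : ∀ x ∈ A, ContinuousOn (g x) S) (hQA : MapsTo Q S A)
    (hQ : ∀ l ∈ S, g (Q l) l = α) {l₀ c : ℝ} (hl₀ : l₀ ∈ S) (hc : c ∈ A) (hQc : Q l₀ < c) :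
    ∀ᶠ l in 𝓝[S] l₀, Q l < c := by
  have hlt : α < g c l₀ := hQ l₀ hl₀ ▸ hmono l₀ hl₀ (hQA hl₀) hc hQc
  filter_upwards [(hcont c hc l₀ hl₀).eventually_const_lt hlt, self_mem_nhdsWithin]
    with l hgl hl
  exact ((hmono l hl).lt_iff_lt (hQA hl) hc).mp (hQ l hl ▸ hgl)

theorem continuousOn_of_level_curve (hA : IsOpen A) (hmono : ∀ l ∈ S, StrictMonoOn (g · l) A)
    (hcont : ∀ x ∈ A, ContinuousOn (g x) S) (hQA : MapsTo Q S A)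
    (hQ : ∀ l ∈ S, g (Q l) l = α) : ContinuousOn Q S := by
  intro l₀ hl₀
  have hA₀ : A ∈ 𝓝 (Q l₀) := hA.mem_nhds (hQA hl₀)
  refine tendsto_order.2 ⟨fun b hb => ?_, fun b hb => ?_⟩
  · obtain ⟨c, hcA, hbc, hcQ⟩ :=
      Filter.nonempty_of_mem (inter_mem (mem_nhdsWithin_of_mem_nhds hA₀) (Ioo_mem_nhdsLT hb))
    filter_upwards [eventually_lt_of_level_curve hmono hcont hQA hQ hl₀ hcA hcQ] with l hl
    exact hbc.trans hl
  · obtain ⟨c, hcA, hQc, hcb⟩ :=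
      Filter.nonempty_of_mem (inter_mem (mem_nhdsWithin_of_mem_nhds hA₀) (Ioo_mem_nhdsGT hb))
    filter_upwards [eventually_gt_of_level_curve hmono hcont hQA hQ hl₀ hcA hQc] with l hl
    exact hl.trans hcb

end LevelCurve

theorem setIntegral_pos_of_forall_pos {X : Type*} [MeasurableSpace X] {μ : Measure X}
    {f : X → ℝ} {s : Set X} (hs : MeasurableSet s) (hμ : μ s ≠ 0) (hf : IntegrableOn f s μ)
    (hpos : ∀ x ∈ s, 0 < f x) : 0 < ∫ x in s, f x ∂μ := by
  rw [setIntegral_pos_iff_support_of_nonneg_ae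
    ((ae_restrict_iff' hs).2 (Eventually.of_forall fun x hx => (hpos x hx).le)) hf]
  exact pos_iff_ne_zero.2 (ne_bot_of_le_ne_bot hμ
    (measure_mono fun x hx => ⟨(hpos x hx).ne', hx⟩))

noncomputable def gammaIntegrand (a s : ℝ) : ℝ := Real.exp (-s) * s ^ (a - 1)

noncomputable def lowerIncGamma (a lam : ℝ) : ℝ := ∫ s in Ioc 0 lam, gammaIntegrand a s

theorem incGamma_eq_setIntegral (a lam : ℝ) :
    incGamma a lam = ∫ s in Ioi lam, gammaIntegrand a s := rfl

section Integrand

variable {a b : ℝ}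

theorem gammaIntegrand_pos {s : ℝ} (hs : 0 < s) : 0 < gammaIntegrand a s :=
  mul_pos (Real.exp_pos _) (Real.rpow_pos_of_pos hs _)

theorem gammaIntegrand_eq_rpow_mul {s : ℝ} (hs : 0 < s) :
    gammaIntegrand b s = s ^ (b - a) * gammaIntegrand a s := by
  rw [gammaIntegrand, gammaIntegrand, show b - 1 = (b - a) + (a - 1) by ring,
    Real.rpow_add hs]
  ring

theorem integrableOn_gammaIntegrand (ha : 0 < a) {t : Set ℝ} (ht : t ⊆ Ioi 0) :
    IntegrableOn (gammaIntegrand a) t :=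
  (Real.GammaIntegral_convergent ha).mono_set ht

end Integrand

section IncompleteGamma

variable {a b lam : ℝ}

theorem incGamma_nonneg (hlam : 0 ≤ lam) : 0 ≤ incGamma a lam :=
  setIntegral_nonneg measurableSet_Ioi fun _ hs => (gammaIntegrand_pos (hlam.trans_lt hs)).le

theorem lowerIncGamma_pos (ha : 0 < a) (hlam : 0 < lam) : 0 < lowerIncGamma a lam :=
  setIntegral_pos_of_forall_pos measurableSet_Ioc (by simp [Real.volume_Ioc, hlam])
    (integrableOn_gammaIntegrand ha Ioc_subset_Ioi_self) fun _ hs => gammaIntegrand_pos hs.1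

theorem Gamma_eq_lowerIncGamma_add_incGamma (ha : 0 < a) (hlam : 0 ≤ lam) :
    Real.Gamma a = lowerIncGamma a lam + incGamma a lam := by
  rw [Real.Gamma_eq_integral ha]
  change ∫ s in Ioi 0, gammaIntegrand a s = _
  rw [← Ioc_union_Ioi_eq_Ioi hlam, setIntegral_union (Ioc_disjoint_Ioi le_rfl) measurableSet_Ioi
      (integrableOn_gammaIntegrand ha Ioc_subset_Ioi_self)
      (integrableOn_gammaIntegrand ha (Ioi_subset_Ioi hlam))]
  rfl

theorem incGamma_lt_incGamma (ha : 0 < a) {l₁ l₂ : ℝ} (h₁ : 0 ≤ l₁) (h₁₂ : l₁ < l₂) :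
    incGamma a l₂ < incGamma a l₁ := by
  have hsplit : incGamma a l₁ = (∫ s in Ioc l₁ l₂, gammaIntegrand a s) + incGamma a l₂ := by
    rw [incGamma_eq_setIntegral, incGamma_eq_setIntegral, ← setIntegral_union
      (Ioc_disjoint_Ioi le_rfl) measurableSet_Ioi
      (integrableOn_gammaIntegrand ha fun s hs => h₁.trans_lt hs.1)
      (integrableOn_gammaIntegrand ha (Ioi_subset_Ioi (h₁.trans h₁₂.le))),
      Ioc_union_Ioi_eq_Ioi h₁₂.le]
  have hpos : 0 < ∫ s in Ioc l₁ l₂, gammaIntegrand a s :=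
    setIntegral_pos_of_forall_pos measurableSet_Ioc (by simp [Real.volume_Ioc, h₁₂])
      (integrableOn_gammaIntegrand ha fun s hs => h₁.trans_lt hs.1)
      fun s hs => gammaIntegrand_pos (h₁.trans_lt hs.1)
  linarith

theorem rpow_mul_incGamma_lt_incGamma (ha : 0 < a) (hab : a < b) (hlam : 0 ≤ lam) :
    lam ^ (b - a) * incGamma a lam < incGamma b lam := by
  rw [incGamma_eq_setIntegral, incGamma_eq_setIntegral, ← integral_const_mul, ← sub_pos,
    ← integral_sub (integrableOn_gammaIntegrand (ha.trans hab) (Ioi_subset_Ioi hlam))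
      ((integrableOn_gammaIntegrand ha (Ioi_subset_Ioi hlam)).const_mul _)]
  refine setIntegral_pos_of_forall_pos measurableSet_Ioi (by simp [Real.volume_Ioi])
    ((integrableOn_gammaIntegrand (ha.trans hab) (Ioi_subset_Ioi hlam)).sub
      ((integrableOn_gammaIntegrand ha (Ioi_subset_Ioi hlam)).const_mul _)) fun s hs => ?_
  have hs₀ : 0 < s := hlam.trans_lt hs
  rw [gammaIntegrand_eq_rpow_mul (a := a) hs₀, sub_pos]
  exact mul_lt_mul_of_pos_right (Real.rpow_lt_rpow hlam hs (by linarith))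
    (gammaIntegrand_pos hs₀)

theorem lowerIncGamma_le_rpow_mul_lowerIncGamma (ha : 0 < a) (hab : a < b) :
    lowerIncGamma b lam ≤ lam ^ (b - a) * lowerIncGamma a lam := by
  rw [lowerIncGamma, lowerIncGamma, ← integral_const_mul]
  refine setIntegral_mono_on (integrableOn_gammaIntegrand (ha.trans hab) Ioc_subset_Ioi_self)
    ((integrableOn_gammaIntegrand ha Ioc_subset_Ioi_self).const_mul _) measurableSet_Ioc
    fun s hs => ?_
  rw [gammaIntegrand_eq_rpow_mul (a := a) hs.1]
  exact mul_le_mul_of_nonneg_right (Real.rpow_le_rpow hs.1.le hs.2 (by linarith))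
    (gammaIntegrand_pos hs.1).le

theorem incGamma_div_Gamma_lt (ha : 0 < a) (hab : a < b) (hlam : 0 < lam) :
    incGamma a lam / Real.Gamma a < incGamma b lam / Real.Gamma b := by
  have hb : 0 < b := ha.trans hab
  have hcross : incGamma a lam * lowerIncGamma b lam < incGamma b lam * lowerIncGamma a lam :=
    calc incGamma a lam * lowerIncGamma b lam
        ≤ incGamma a lam * (lam ^ (b - a) * lowerIncGamma a lam) :=
          mul_le_mul_of_nonneg_left (lowerIncGamma_le_rpow_mul_lowerIncGamma ha hab)
            (incGamma_nonneg hlam.le)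
      _ = lam ^ (b - a) * incGamma a lam * lowerIncGamma a lam := by ring
      _ < incGamma b lam * lowerIncGamma a lam :=
          mul_lt_mul_of_pos_right (rpow_mul_incGamma_lt_incGamma ha hab hlam.le)
            (lowerIncGamma_pos ha hlam)
  rw [div_lt_div_iff₀ (Real.Gamma_pos_of_pos ha) (Real.Gamma_pos_of_pos hb),
    Gamma_eq_lowerIncGamma_add_incGamma ha hlam.le,
    Gamma_eq_lowerIncGamma_add_incGamma hb hlam.le]
  linarith

theorem continuousOn_lowerIncGamma (ha : 0 < a) : ContinuousOn (lowerIncGamma a) (Ici 0) := by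
  intro l hl
  have hint : IntegrableOn (gammaIntegrand a) (Icc 0 (l + 1)) := by
    rw [integrableOn_Icc_iff_integrableOn_Ioc]
    exact integrableOn_gammaIntegrand ha Ioc_subset_Ioi_self
  refine (intervalIntegral.continuousOn_primitive hint l ⟨hl, by linarith⟩).mono_of_mem_nhdsWithin ?_
  rw [← Ici_inter_Iic]
  exact inter_mem_nhdsWithin _ (Iic_mem_nhds (by linarith))

theorem continuousOn_incGamma (ha : 0 < a) : ContinuousOn (incGamma a) (Ici 0) :=
  (continuousOn_const.sub (continuousOn_lowerIncGamma ha)).congr fun _ hl =>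
    eq_sub_of_add_eq' (Gamma_eq_lowerIncGamma_add_incGamma ha hl).symm

end IncompleteGamma

noncomputable def contPoissonCDF (x lam : ℝ) : ℝ := incGamma (x + 1) lam / Real.Gamma (x + 1)

theorem contPoissonCDF_strictMonoOn {lam : ℝ} (hlam : 0 < lam) :
    StrictMonoOn (contPoissonCDF · lam) (Ioi (-1)) := fun x hx y _ hxy =>
  incGamma_div_Gamma_lt (neg_lt_iff_pos_add.mp hx) (by linarith) hlam

theorem contPoissonCDF_strictAntiOn {x : ℝ} (hx : -1 < x) :
    StrictAntiOn (contPoissonCDF x) (Ici 0) := fun _ h₁ _ _ h₁₂ =>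
  div_lt_div_of_pos_right (incGamma_lt_incGamma (neg_lt_iff_pos_add.mp hx) h₁ h₁₂)
    (Real.Gamma_pos_of_pos (neg_lt_iff_pos_add.mp hx))

theorem continuousOn_contPoissonCDF {x : ℝ} (hx : -1 < x) :
    ContinuousOn (contPoissonCDF x) (Ici 0) :=
  (continuousOn_incGamma (neg_lt_iff_pos_add.mp hx)).div_const _

theorem contPoisson_quantile_strictMono_continuous_general (α : ℝ)
    (Q : ℝ → ℝ)
    (hQ : ∀ lam : ℝ, 0 < lam → -1 < Q lam ∧
      incGamma (Q lam + 1) lam / Real.Gamma (Q lam + 1) = α) :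
    StrictMonoOn Q (Set.Ioi (0 : ℝ)) ∧ ContinuousOn Q (Set.Ioi (0 : ℝ)) := by
  have hmaps : MapsTo Q (Ioi 0) (Ioi (-1)) := fun lam hlam => (hQ lam hlam).1
  have hlevel : ∀ lam ∈ Ioi (0 : ℝ), contPoissonCDF (Q lam) lam = α :=
    fun lam hlam => (hQ lam hlam).2
  have hmono : ∀ lam ∈ Ioi (0 : ℝ), StrictMonoOn (contPoissonCDF · lam) (Ioi (-1)) :=
    fun _ hlam => contPoissonCDF_strictMonoOn hlam
  exact ⟨strictMonoOn_of_level_curve hmono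
      (fun _ hx => (contPoissonCDF_strictAntiOn hx).mono Ioi_subset_Ici_self) hmaps hlevel,
    continuousOn_of_level_curve isOpen_Ioi hmono
      (fun _ hx => (continuousOn_contPoissonCDF hx).mono Ioi_subset_Ici_self) hmaps hlevel⟩

/-- For fixed `α ∈ (0,1)`, the `α`-quantile `Q_α(λ)` of the Continuous Poisson
distribution, i.e. the unique `x > -1` with `Γ(x+1, λ)/Γ(x+1) = α`, is a
strictly increasing continuous function of `λ` on `(0, ∞)`. -/
theorem contPoisson_quantile_strictMono_continuous (α : ℝ)
    (hα : α ∈ Set.Ioo (0 : ℝ) 1) (Q : ℝ → ℝ)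
    (hQ : ∀ lam : ℝ, 0 < lam → -1 < Q lam ∧
      incGamma (Q lam + 1) lam / Real.Gamma (Q lam + 1) = α) :
    StrictMonoOn Q (Set.Ioi (0 : ℝ)) ∧ ContinuousOn Q (Set.Ioi (0 : ℝ)) :=
  contPoisson_quantile_strictMono_continuous_general α Q hQ
end
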